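/- For d = 3 and the Norrell state |N⟩ = (−|0⟩ + 2|1⟩ − |2⟩)/√6 in ℂ³, the min-thauma SDP has optimal value sup{ ⟨N|σ|N⟩ : σ positive semidefinite on ℂ³, ‖σ‖_{W,1} ≤ 1 } = 2/3; that is, θ_min(N) = log₂(3/2). -/

import Mathlib

/-!
For odd `d` the phase-space point operators are twisted reflections,
`(A_{(a,b)})_{rc} = [r + c = 2b] ω^{a(r - c)}`, so `∑_u A_u = d • 1`.
For `d = 3` this gives a feasible point of the dual SDP:
`|N⟩⟨N| = (1/3) ∑_u c_u A_u - |k⟩⟨k|` with `k = (1, 0, -1)/√6`, `c_u = -1/3` at `u = (0,0), (0,2)`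
and `c_u = 2/3` elsewhere. Hence for `σ ⪰ 0`,
`⟨N|σ|N⟩ = ∑_u c_u W_σ(u) - ⟨k|σ|k⟩ ≤ (2/3) ‖σ‖_{W,1}`.
The bound is attained by the stabilizer state `|1⟩⟨1|`: its Wigner function is `1/3` on the line
`a₂ = 1` and `0` elsewhere, and `|⟨N|1⟩|² = 2/3`.
-/

open Matrix Complex BigOperators
open scoped ComplexOrder

noncomputable section

namespace Magic

/-- ω = exp(2πi/d) -/
def omegaC (d : ℕ) : ℂ := Complex.exp (2 * Real.pi * Complex.I / d)

/-- τ = exp((d+1)πi/d) -/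
def tauC (d : ℕ) : ℂ := Complex.exp ((d + 1) * Real.pi * Complex.I / d)

/-- Shift operator X|j⟩ = |j⊕1⟩. -/
def shiftX (d : ℕ) [NeZero d] : Matrix (ZMod d) (ZMod d) ℂ :=
  Matrix.of fun r c => if r = c + 1 then 1 else 0

/-- Boost operator Z|j⟩ = ω^j |j⟩. -/
def boostZ (d : ℕ) [NeZero d] : Matrix (ZMod d) (ZMod d) ℂ :=
  Matrix.diagonal fun j => omegaC d ^ j.val

/-- Heisenberg–Weyl operator T_u = τ^{-a₁a₂} Z^{a₁} X^{a₂}. -/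
def HW (d : ℕ) [NeZero d] (u : ZMod d × ZMod d) : Matrix (ZMod d) (ZMod d) ℂ :=
  tauC d ^ (-((u.1.val * u.2.val : ℕ) : ℤ)) • (boostZ d ^ u.1.val * shiftX d ^ u.2.val)

/-- A₀ = (1/d) ∑_u T_u. -/
def A0 (d : ℕ) [NeZero d] : Matrix (ZMod d) (ZMod d) ℂ :=
  (d : ℂ)⁻¹ • ∑ u : ZMod d × ZMod d, HW d u

/-- Phase-space point operators A_u = T_u A₀ T_u†. -/
def Apt (d : ℕ) [NeZero d] (u : ZMod d × ZMod d) : Matrix (ZMod d) (ZMod d) ℂ :=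
  HW d u * A0 d * (HW d u)ᴴ

/-- Discrete Wigner function W_V(u) = tr(A_u V)/d. -/
def wig (d : ℕ) [NeZero d] (V : Matrix (ZMod d) (ZMod d) ℂ) (u : ZMod d × ZMod d) : ℂ :=
  (Apt d u * V).trace / d

/-- Wigner trace norm ‖V‖_{W,1} = ∑_u |W_V(u)|. -/
def wnorm1 (d : ℕ) [NeZero d] (V : Matrix (ZMod d) (ZMod d) ℂ) : ℝ :=
  ∑ u : ZMod d × ZMod d, ‖wig d V u‖

/-- Wigner spectral norm ‖V‖_{W,∞} = d · max_u |W_V(u)|. -/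
def wnormInf (d : ℕ) [NeZero d] (V : Matrix (ZMod d) (ZMod d) ℂ) : ℝ :=
  (d : ℝ) * ⨆ u : ZMod d × ZMod d, ‖wig d V u‖

end Magic

namespace Magic

/-- The Strange state |S⟩ = (|1⟩ - |2⟩)/√2. -/
def strange : ZMod 3 → ℂ :=
  fun j => if j = 1 then ((Real.sqrt 2)⁻¹ : ℝ)
    else if j = 2 then (-(Real.sqrt 2)⁻¹ : ℝ) else 0

/-- The Norrell state |N⟩ = (-|0⟩ + 2|1⟩ - |2⟩)/√6. -/
def norrell : ZMod 3 → ℂ :=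
  fun j => if j = 1 then ((2 / Real.sqrt 6 : ℝ) : ℂ) else ((-(Real.sqrt 6)⁻¹ : ℝ) : ℂ)

/-- The H₊ state |H₊⟩ = ((1+√3)|0⟩ + |1⟩ + |2⟩)/√(2(3+√3)). -/
def hplus : ZMod 3 → ℂ :=
  fun j => if j = 0 then (((1 + Real.sqrt 3) / Real.sqrt (2 * (3 + Real.sqrt 3)) : ℝ) : ℂ)
    else (((Real.sqrt (2 * (3 + Real.sqrt 3)))⁻¹ : ℝ) : ℂ)

/-- ξ = exp(2πi/9). -/
def xi : ℂ := Complex.exp (2 * Real.pi * Complex.I / 9)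

/-- The T state |T⟩ = (ξ|0⟩ + |1⟩ + ξ⁻¹|2⟩)/√3. -/
def tket : ZMod 3 → ℂ :=
  fun j => (if j = 0 then xi else if j = 1 then 1 else xi⁻¹) / ((Real.sqrt 3 : ℝ) : ℂ)

/-- The rank-one projector |ψ⟩⟨ψ|. -/
def projOf (ψ : ZMod 3 → ℂ) : Matrix (ZMod 3) (ZMod 3) ℂ :=
  Matrix.vecMulVec ψ (star ψ)

end Magic

namespace Magic

open ZMod

section PhaseSpace

lemma two_mul_inv_two {d : ℕ} (hd : Odd d) : (2 : ZMod d) * 2⁻¹ = 1 := by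
  exact_mod_cast ZMod.coe_mul_inv_eq_one 2 (Nat.coprime_two_left.mpr hd)

lemma eq_two_mul_iff {d : ℕ} (hd : Odd d) (x b : ZMod d) : x = 2 * b ↔ b = x * 2⁻¹ := by
  have h2 := two_mul_inv_two hd
  constructor <;> rintro rfl
  · linear_combination (-b) * h2
  · linear_combination (-x) * h2

variable {d : ℕ} [NeZero d]

lemma omegaC_pow_val (j : ZMod d) : omegaC d ^ j.val = stdAddChar j := by
  rw [omegaC, ← Complex.exp_nat_mul, stdAddChar_apply, toCircle_apply]
  congr 1
  ring

lemma star_stdAddChar (x : ZMod d) : star (stdAddChar x) = stdAddChar (-x) := by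
  rw [stdAddChar_apply, stdAddChar_apply, AddChar.map_neg_eq_inv, Circle.coe_inv_eq_conj]
  rfl

lemma tauC_eq_stdAddChar (hd : Odd d) : tauC d = stdAddChar (2⁻¹ : ZMod d) := by
  obtain ⟨k, rfl⟩ := hd
  have hinv : (2⁻¹ : ZMod (2 * k + 1)) = ((k + 1 : ℕ) : ZMod (2 * k + 1)) := by
    refine ZMod.inv_eq_of_mul_eq_one _ _ _ ?_
    have hchar : ((2 * k + 1 : ℕ) : ZMod (2 * k + 1)) = 0 := ZMod.natCast_self _
    push_cast at hchar ⊢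
    linear_combination hchar
  rw [hinv, tauC, stdAddChar_apply, toCircle_natCast]
  congr 1
  push_cast
  ring

lemma tauC_zpow_neg (hd : Odd d) (n : ℕ) :
    tauC d ^ (-(n : ℤ)) = stdAddChar (-(n * 2⁻¹ : ZMod d)) := by
  rw [tauC_eq_stdAddChar hd, ← AddChar.map_zsmul_eq_zpow, zsmul_eq_mul]
  push_cast
  ring_nf

lemma shiftX_pow_apply (n : ℕ) (r c : ZMod d) :
    (shiftX d ^ n) r c = if r = c + n then 1 else 0 := by
  induction n generalizing r c with
  | zero => simp [Matrix.one_apply]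
  | succ n ih =>
    rw [pow_succ, Matrix.mul_apply, Fintype.sum_eq_single (c + 1)]
    · rw [ih]
      simp only [shiftX, Matrix.of_apply, if_true, mul_one]
      push_cast
      simp only [add_assoc, add_comm (1 : ZMod d)]
    · intro k hk
      simp [shiftX, hk]

lemma HW_apply (hd : Odd d) (u : ZMod d × ZMod d) (r c : ZMod d) :
    HW d u r c = if r = c + u.2 then stdAddChar (u.1 * (r - u.2 * 2⁻¹)) else 0 := by
  rw [HW, Matrix.smul_apply, boostZ, Matrix.diagonal_pow, Matrix.diagonal_mul, shiftX_pow_apply,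
    tauC_zpow_neg hd]
  simp only [natCast_val, cast_id', id_eq, Nat.cast_mul, omegaC_pow_val]
  split_ifs
  · rw [mul_one, Pi.pow_apply, ← AddChar.map_nsmul_eq_pow, smul_eq_mul, ← AddChar.map_add_eq_mul,
      nsmul_eq_mul, natCast_val, cast_id', id_eq]
    ring_nf
  · simp

lemma A0_apply (hd : Odd d) (r c : ZMod d) : A0 d r c = if r + c = 0 then 1 else 0 := by
  have h2 := two_mul_inv_two hd
  have hcollapse : ∀ a : ZMod d, ∑ b : ZMod d,
      (if r = c + b then stdAddChar (a * (r - b * 2⁻¹)) else 0) =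
        stdAddChar (a * ((r + c) * 2⁻¹)) := by
    intro a
    rw [Fintype.sum_eq_single (r - c) fun b hb => if_neg fun h => hb (by rw [h]; ring),
      if_pos (by ring)]
    congr 2
    linear_combination (-r) * h2
  rw [A0, Matrix.smul_apply, Matrix.sum_apply, Fintype.sum_prod_type]
  simp only [HW_apply hd, hcollapse, AddChar.sum_mulShift _ (isPrimitive_stdAddChar d),
    (IsUnit.of_mul_eq_one_right _ h2).mul_left_eq_zero, ZMod.card]
  split_ifs <;> simp

lemma HW_mul_A0_apply (hd : Odd d) (u : ZMod d × ZMod d) (r c : ZMod d) :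
    (HW d u * A0 d) r c = if r + c = u.2 then stdAddChar (u.1 * (r - u.2 * 2⁻¹)) else 0 := by
  rw [Matrix.mul_apply, Fintype.sum_eq_single (r - u.2)]
  · simp only [HW_apply hd, A0_apply hd, sub_add_cancel, if_true]
    simp only [sub_add_eq_add_sub, sub_eq_zero]
    split_ifs <;> simp
  · intro k hk
    rw [HW_apply hd, if_neg fun h => hk (by rw [h]; ring), zero_mul]

lemma Apt_apply (hd : Odd d) (u : ZMod d × ZMod d) (r c : ZMod d) :
    Apt d u r c = if r + c = 2 * u.2 then stdAddChar (u.1 * (r - c)) else 0 := by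
  rw [Apt, Matrix.mul_apply, Fintype.sum_eq_single (c - u.2)]
  · simp only [HW_mul_A0_apply hd, Matrix.conjTranspose_apply, HW_apply hd, sub_add_cancel, if_true,
      star_stdAddChar]
    have hcond : r + (c - u.2) = u.2 ↔ r + c = 2 * u.2 := by
      constructor <;> intro h <;> linear_combination h
    simp only [hcond]
    split_ifs
    · rw [← AddChar.map_add_eq_mul]
      ring_nf
    · simp
  · intro l hl
    rw [Matrix.conjTranspose_apply, HW_apply hd, if_neg fun h => hl (by rw [h]; ring), star_zero,
      mul_zero]

lemma sum_Apt (hd : Odd d) : ∑ u, Apt d u = (d : ℂ) • 1 := by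
  ext r c
  rw [Matrix.sum_apply, Fintype.sum_prod_type, Finset.sum_comm]
  simp only [Apt_apply hd, eq_two_mul_iff hd, Finset.sum_ite_irrel, Finset.sum_const_zero,
    Finset.sum_ite_eq', Finset.mem_univ, if_true,
    AddChar.sum_mulShift _ (isPrimitive_stdAddChar d),
    ZMod.card, sub_eq_zero, Matrix.smul_apply, Matrix.one_apply]
  split_ifs <;> simp

lemma re_trace_mul_sub_le_mul_wnorm1 {σ : Matrix (ZMod d) (ZMod d) ℂ} (hσ : σ.PosSemidef)
    (c : ZMod d × ZMod d → ℝ) {B : ℝ} (hc : ∀ u, |c u| ≤ B) (k : ZMod d → ℂ) :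
    (σ * ((d : ℂ)⁻¹ • ∑ u, (c u : ℂ) • Apt d u - vecMulVec k (star k))).trace.re ≤
      B * wnorm1 d σ := by
  have htrace : (σ * ((d : ℂ)⁻¹ • ∑ u, (c u : ℂ) • Apt d u - vecMulVec k (star k))).trace =
      ∑ u, (c u : ℂ) * wig d σ u - star k ⬝ᵥ σ *ᵥ k := by
    simp only [Matrix.mul_sub, Matrix.trace_sub, Matrix.mul_smul, Matrix.trace_smul,
      Matrix.trace_sum, mul_vecMulVec, trace_vecMulVec, dotProduct_comm _ (star k), wig,
      Matrix.trace_mul_comm σ, smul_eq_mul, Finset.mul_sum]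
    congr 1
    refine Finset.sum_congr rfl fun u _ => ?_
    ring
  have hslack : 0 ≤ (star k ⬝ᵥ σ *ᵥ k).re :=
    (Complex.nonneg_iff.mp (hσ.dotProduct_mulVec_nonneg k)).1
  calc (σ * ((d : ℂ)⁻¹ • ∑ u, (c u : ℂ) • Apt d u - vecMulVec k (star k))).trace.re
      ≤ ∑ u, c u * (wig d σ u).re := by
        simp only [htrace, Complex.sub_re, Complex.re_sum, Complex.re_ofReal_mul]
        linarith
    _ ≤ ∑ u, B * ‖wig d σ u‖ := by
        refine Finset.sum_le_sum fun u _ => ?_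
        calc c u * (wig d σ u).re ≤ |c u * (wig d σ u).re| := le_abs_self _
          _ = |c u| * |(wig d σ u).re| := abs_mul _ _
          _ ≤ B * ‖wig d σ u‖ :=
            mul_le_mul (hc u) (Complex.abs_re_le_norm _) (abs_nonneg _)
              ((abs_nonneg _).trans (hc u))
    _ = B * wnorm1 d σ := by rw [wnorm1, Finset.mul_sum]

lemma wig_vecMulVec_single (hd : Odd d) (j : ZMod d) (u : ZMod d × ZMod d) :
    wig d (vecMulVec (Pi.single j 1) (star (Pi.single j 1))) u =
      if u.2 = j then (d : ℂ)⁻¹ else 0 := by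
  rw [wig, mul_vecMulVec, trace_vecMulVec]
  have hdiag : j + j = 2 * u.2 ↔ u.2 = j := by
    rw [eq_two_mul_iff hd, ← two_mul, mul_comm 2 j, mul_assoc, two_mul_inv_two hd, mul_one]
  simp only [mulVec_single, MulOpposite.op_one, one_smul, Pi.star_single, star_one,
    dotProduct_single, col_apply, Apt_apply hd, hdiag, sub_self, mul_zero, AddChar.map_zero_eq_one,
    mul_one]
  split_ifs <;> simp

lemma wnorm1_vecMulVec_single (hd : Odd d) (j : ZMod d) :
    wnorm1 d (vecMulVec (Pi.single j 1) (star (Pi.single j 1))) = 1 := by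
  simp only [wnorm1, wig_vecMulVec_single hd]
  simp [apply_ite (‖·‖), Fintype.sum_prod_type]

end PhaseSpace

def norrellSlack : ZMod 3 → ℂ := fun j =>
  if j = 0 then (((Real.sqrt 6)⁻¹ : ℝ) : ℂ) else if j = 2 then ((-(Real.sqrt 6)⁻¹ : ℝ) : ℂ) else 0

def norrellCoeff (u : ZMod 3 × ZMod 3) : ℝ :=
  2 / 3 - if u ∈ ({(0, 0), (0, 2)} : Finset (ZMod 3 × ZMod 3)) then 1 else 0

lemma abs_norrellCoeff_le (u : ZMod 3 × ZMod 3) : |norrellCoeff u| ≤ 2 / 3 := by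
  rw [norrellCoeff]
  split_ifs <;> norm_num [abs_le]

lemma sum_norrellCoeff_smul_Apt :
    ∑ u, (norrellCoeff u : ℂ) • Apt 3 u = (2 : ℂ) • 1 - (Apt 3 (0, 0) + Apt 3 (0, 2)) := by
  have hterm : ∀ u, (norrellCoeff u : ℂ) • Apt 3 u = (2 / 3 : ℂ) • Apt 3 u -
      if u ∈ ({(0, 0), (0, 2)} : Finset (ZMod 3 × ZMod 3)) then Apt 3 u else 0 := by
    intro u
    rw [norrellCoeff]
    split_ifs <;> simp [sub_smul]
  rw [Finset.sum_congr rfl fun u _ => hterm u, Finset.sum_sub_distrib, ← Finset.smul_sum,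
    sum_Apt (⟨1, rfl⟩ : Odd 3), Finset.sum_ite_mem, Finset.univ_inter, Finset.sum_pair (by decide),
    smul_smul]
  norm_num

lemma projOf_norrell_eq : projOf norrell =
    (3 : ℂ)⁻¹ • ∑ u, (norrellCoeff u : ℂ) • Apt 3 u -
      vecMulVec norrellSlack (star norrellSlack) := by
  rw [sum_norrellCoeff_smul_Apt]
  ext r c
  simp only [projOf, Matrix.sub_apply, Matrix.smul_apply, Matrix.add_apply, vecMulVec_apply,
    Matrix.one_apply, Apt_apply (⟨1, rfl⟩ : Odd 3)]
  have h6 : ((Real.sqrt 6 : ℝ) : ℂ) ^ 2 = 6 := by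
    rw [← Complex.ofReal_pow, Real.sq_sqrt (by norm_num)]
    norm_num
  have hcases : ∀ j : ZMod 3, j = 0 ∨ j = 1 ∨ j = 2 := by decide
  obtain rfl | rfl | rfl := hcases r <;> obtain rfl | rfl | rfl := hcases c <;>
    simp +decide [norrell, norrellSlack, Pi.star_apply] <;>
    field_simp <;> rw [h6] <;> norm_num

lemma trace_mul_projOf (σ : Matrix (ZMod 3) (ZMod 3) ℂ) (φ : ZMod 3 → ℂ) :
    (σ * projOf φ).trace = star φ ⬝ᵥ σ *ᵥ φ := by
  rw [projOf, mul_vecMulVec, trace_vecMulVec, dotProduct_comm]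

lemma re_norrell_inner_projOf_single_one :
    (star norrell ⬝ᵥ projOf (Pi.single 1 1) *ᵥ norrell).re = 2 / 3 := by
  have hN1 : norrell 1 = ((2 / Real.sqrt 6 : ℝ) : ℂ) := if_pos rfl
  have hinner :
      star norrell ⬝ᵥ projOf (Pi.single 1 1) *ᵥ norrell = star (norrell 1) * norrell 1 := by
    simp [projOf, vecMulVec_mulVec, mul_comm]
  rw [hinner, hN1, Complex.star_def, Complex.conj_ofReal, ← Complex.ofReal_mul, Complex.ofReal_re,
    div_mul_div_comm, Real.mul_self_sqrt (by norm_num)]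
  norm_num

/-- θ_min of the Norrell state:
sup{ ⟨N|σ|N⟩ : σ ⪰ 0, ‖σ‖_{W,1} ≤ 1 } = 2/3. -/
theorem norrell_minThauma_sdp :
    sSup {x : ℝ | ∃ σ : Matrix (ZMod 3) (ZMod 3) ℂ,
      σ.PosSemidef ∧ wnorm1 3 σ ≤ 1 ∧ x = (star norrell ⬝ᵥ σ.mulVec norrell).re} = 2 / 3 := by
  refine IsGreatest.csSup_eq ⟨⟨projOf (Pi.single 1 1), posSemidef_vecMulVec_self_star _,
    (wnorm1_vecMulVec_single (⟨1, rfl⟩ : Odd 3) 1).le, re_norrell_inner_projOf_single_one.symm⟩, ?_⟩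
  rintro x ⟨σ, hσ, hw, rfl⟩
  have hcert := re_trace_mul_sub_le_mul_wnorm1 hσ norrellCoeff abs_norrellCoeff_le norrellSlack
  rw [Nat.cast_ofNat, ← projOf_norrell_eq, trace_mul_projOf] at hcert
  linarith

end Magic
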